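/- If |μ| > σ > 0 and y ∈ {0,1}, then for z̄ = μ + (2y−1)σ·φ(μ/σ)/Φ((2y−1)μ/σ) one has |z̄|/(|μ|+σ) ≤ 1 + (σ/|μ|)·φ(|μ|/σ)/Φ(−|μ|/σ), and setting t = |μ|/σ > 1 this is at most 1 + (t²+1)/t² < 3. -/

import Mathlib

/-- Standard normal density. -/
noncomputable def stdphi (t : ℝ) : ℝ := (Real.sqrt (2 * Real.pi))⁻¹ * Real.exp (-t ^ 2 / 2)

/-- Standard normal cumulative distribution function. -/
noncomputable def stdPhi (x : ℝ) : ℝ := ∫ t in Set.Iic x, stdphi t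



section TruncAux
open MeasureTheory

noncomputable def gE (x : ℝ) : ℝ := Real.exp (-x^2/2)
lemma gE_pos (x : ℝ) : 0 < gE x := Real.exp_pos _
lemma continuous_gE : Continuous gE := by unfold gE; fun_prop
lemma integrable_gE : Integrable gE := by
  have h : gE = fun x => Real.exp (-(1/2) * x^2) := by funext x; unfold gE; ring_nf
  rw [h]; exact integrable_exp_neg_mul_sq (by norm_num)
noncomputable def fAux (x : ℝ) : ℝ := -x * gE x / (x^2+1)
lemma hasDerivAt_fAux (x : ℝ) :
    HasDerivAt fAux (gE x * (x^4+2*x^2-1)/(x^2+1)^2) x := by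
  have hne : (x^2+1 : ℝ) ≠ 0 := by positivity
  have hE : HasDerivAt gE (gE x * (-x)) x := by
    have h0 : HasDerivAt (fun x : ℝ => -x^2/2) (-x) x := by
      have := ((hasDerivAt_pow 2 x).neg).div_const 2
      exact this.congr_deriv (by norm_num; ring)
    exact h0.exp
  have hu : HasDerivAt (fun x => -x * gE x) ((x^2-1) * gE x) x := by
    have := ((hasDerivAt_id x).neg).mul hE
    exact this.congr_deriv (by simp only [Pi.neg_apply, id_eq]; ring)
  have hv : HasDerivAt (fun x : ℝ => x^2+1) (2*x) x := by
    have := (hasDerivAt_pow 2 x).add_const 1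
    exact this.congr_deriv (by norm_num)
  have := hu.div hv hne
  exact this.congr_deriv (by field_simp; ring)

lemma gE_tail (t : ℝ) : fAux (-t) ≤ ∫ x in Set.Iic (-t), gE x := by
  have hcont : Continuous (fun x : ℝ => gE x * (x^4+2*x^2-1)/(x^2+1)^2) := by
    apply Continuous.div (continuous_gE.mul (by fun_prop)) (by fun_prop)
    intro x; positivity
  have key : ∀ a : ℝ, a ≤ -t → fAux (-t) - fAux a ≤ ∫ x in Set.Iic (-t), gE x := by
    intro a ha
    have hftc : ∫ x in a..(-t), (gE x * (x^4+2*x^2-1)/(x^2+1)^2) = fAux (-t) - fAux a :=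
      intervalIntegral.integral_eq_sub_of_hasDerivAt (fun x _ => hasDerivAt_fAux x)
        (hcont.intervalIntegrable a (-t))
    rw [← hftc]
    have h1 : ∫ x in a..(-t), (gE x * (x^4+2*x^2-1)/(x^2+1)^2) ≤ ∫ x in a..(-t), gE x := by
      apply intervalIntegral.integral_mono_on ha (hcont.intervalIntegrable a (-t))
        (continuous_gE.intervalIntegrable a (-t))
      intro x _
      rw [div_le_iff₀ (by positivity)]
      nlinarith [(gE_pos x).le, sq_nonneg x, sq_nonneg (x^2)]
    have h2 : ∫ x in a..(-t), gE x ≤ ∫ x in Set.Iic (-t), gE x := by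
      rw [intervalIntegral.integral_of_le ha]
      apply setIntegral_mono_set integrable_gE.integrableOn
        (Filter.Eventually.of_forall fun x => (gE_pos x).le)
        (Filter.Eventually.of_forall fun x hx => Set.Ioc_subset_Iic_self hx)
    linarith
  have hbound : ∀ a : ℝ, ‖fAux a‖ ≤ gE a := by
    intro a
    rw [Real.norm_eq_abs]
    unfold fAux
    rw [abs_div, abs_of_pos (show (0:ℝ) < a^2+1 by positivity), abs_mul,
      abs_of_pos (gE_pos a), div_le_iff₀ (by positivity)]
    nlinarith [(gE_pos a).le, abs_nonneg (-a), sq_abs (-a), sq_nonneg (|(-a)| - 1)]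
  have hgE0 : Filter.Tendsto gE Filter.atBot (nhds 0) := by
    apply Real.tendsto_exp_atBot.comp
    apply Filter.tendsto_atBot_mono' _ _ (Filter.tendsto_id.atBot_div_const (show (0:ℝ) < 2 by norm_num))
    · filter_upwards [Filter.eventually_le_atBot (-1 : ℝ)] with a ha
      simp only [id_eq]
      nlinarith [sq_nonneg (a+1)]
  have hlim : Filter.Tendsto (fun a => fAux (-t) - fAux a) Filter.atBot (nhds (fAux (-t))) := by
    have h0 : Filter.Tendsto fAux Filter.atBot (nhds 0) := squeeze_zero_norm hbound hgE0
    simpa using (h0.const_sub (fAux (-t)))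
  apply le_of_tendsto hlim
  filter_upwards [Filter.eventually_le_atBot (-t)] with a ha using key a ha

lemma stdphi_pos (x : ℝ) : 0 < stdphi x := by
  unfold stdphi
  have := Real.pi_pos
  positivity

lemma stdphi_eq (x : ℝ) : stdphi x = (Real.sqrt (2 * Real.pi))⁻¹ * gE x := rfl

lemma integrable_stdphi : Integrable stdphi := by
  have : stdphi = fun x => (Real.sqrt (2 * Real.pi))⁻¹ * gE x := rfl
  rw [this]; exact integrable_gE.const_mul _

lemma stdPhi_eq (x : ℝ) : stdPhi x = (Real.sqrt (2 * Real.pi))⁻¹ * ∫ t in Set.Iic x, gE t := by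
  unfold stdPhi
  simp_rw [stdphi_eq]
  rw [integral_const_mul]

lemma stdPhi_tail (t : ℝ) : stdphi t * t / (t^2+1) ≤ stdPhi (-t) := by
  have h := gE_tail t
  have hc : (0:ℝ) < (Real.sqrt (2 * Real.pi))⁻¹ := by
    have := Real.pi_pos; positivity
  rw [stdPhi_eq, stdphi_eq]
  have hf : fAux (-t) = gE t * t / (t^2+1) := by
    unfold fAux gE
    rw [neg_neg, neg_sq]; ring
  calc (Real.sqrt (2 * Real.pi))⁻¹ * gE t * t / (t ^ 2 + 1)
      = (Real.sqrt (2 * Real.pi))⁻¹ * fAux (-t) := by rw [hf]; ring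
    _ ≤ _ := by apply mul_le_mul_of_nonneg_left h hc.le

lemma stdPhi_mono {x y : ℝ} (h : x ≤ y) : stdPhi x ≤ stdPhi y := by
  unfold stdPhi
  exact setIntegral_mono_set integrable_stdphi.integrableOn
    (Filter.Eventually.of_forall fun x => (stdphi_pos x).le)
    (Filter.Eventually.of_forall fun z hz => le_trans hz h)

lemma stdPhi_pos (t : ℝ) (ht : 0 < t) : 0 < stdPhi (-t) := by
  have := stdPhi_tail t
  have h2 : 0 < stdphi t * t / (t^2+1) := by
    have := stdphi_pos t; positivity
  linarith


end TruncAux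

open MeasureTheory in
/-- If `|μ| > σ > 0` and `y ∈ {0,1}`, then for
`z̄ = μ + (2y−1)σ φ(μ/σ)/Φ((2y−1)μ/σ)` one has
`|z̄|/(|μ|+σ) ≤ 1 + (σ/|μ|) φ(|μ|/σ)/Φ(−|μ|/σ)`, and with `t = |μ|/σ > 1` this
quantity is at most `1 + (t²+1)/t² < 3`. -/
theorem trunc_normal_mean_ratio_bound_large_mu (y μ σ : ℝ) (hy : y = 0 ∨ y = 1)
    (hσ : 0 < σ) (hμ : σ < |μ|) :
    |μ + (2 * y - 1) * σ * stdphi (μ / σ) / stdPhi ((2 * y - 1) * μ / σ)| / (|μ| + σ)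
        ≤ 1 + (σ / |μ|) * stdphi (|μ| / σ) / stdPhi (-(|μ| / σ))
      ∧ 1 + (σ / |μ|) * stdphi (|μ| / σ) / stdPhi (-(|μ| / σ))
        ≤ 1 + ((|μ| / σ) ^ 2 + 1) / (|μ| / σ) ^ 2
      ∧ 1 + ((|μ| / σ) ^ 2 + 1) / (|μ| / σ) ^ 2 < 3 := by
  set t := |μ| / σ with htdef
  have hm : (0:ℝ) < |μ| := lt_trans hσ hμ
  have ht1 : 1 < t := (one_lt_div hσ).2 hμ
  have ht0 : 0 < t := lt_trans one_pos ht1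
  set p := stdphi t with hpdef
  have hp : 0 < p := stdphi_pos t
  set Φm := stdPhi (-t) with hPhimdef
  have hΦm : 0 < Φm := stdPhi_pos t ht0
  have htail : p * t / (t^2+1) ≤ Φm := stdPhi_tail t
  -- part 1
  have hε : |2*y - 1| = 1 := by rcases hy with h | h <;> subst h <;> norm_num
  have hargabs : |(2*y-1) * μ / σ| = t := by
    rw [abs_div, abs_mul, hε, one_mul, abs_of_pos hσ]
  have harg : -t ≤ (2*y-1) * μ / σ := by
    rw [← hargabs]; exact neg_abs_le _
  set D := stdPhi ((2*y-1) * μ / σ) with hDdef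
  have hD : Φm ≤ D := stdPhi_mono harg
  have hDpos : 0 < D := lt_of_lt_of_le hΦm hD
  have hphieq : stdphi (μ / σ) = p := by
    rw [hpdef]
    unfold stdphi
    rw [show (μ/σ)^2 = t^2 by rw [htdef, div_pow, div_pow, sq_abs]]
  have part1 : |μ + (2 * y - 1) * σ * stdphi (μ / σ) / D| / (|μ| + σ)
      ≤ 1 + (σ / |μ|) * p / Φm := by
    rw [div_le_iff₀ (by positivity)]
    have step1 : |μ + (2 * y - 1) * σ * stdphi (μ / σ) / D| ≤ |μ| + σ * p / D := by
      refine le_trans (abs_add_le _ _) ?_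
      apply add_le_add le_rfl
      rw [abs_div, abs_of_pos hDpos, abs_mul, abs_mul, hε, one_mul, hphieq,
        abs_of_pos hσ, abs_of_pos hp]
    have step2 : σ * p / D ≤ σ * p / Φm :=
      div_le_div_of_nonneg_left (by positivity) hΦm hD
    have step3 : |μ| + σ * p / Φm ≤ (1 + σ / |μ| * p / Φm) * (|μ| + σ) := by
      have hexp : (1 + σ / |μ| * p / Φm) * (|μ| + σ)
          = |μ| + σ + σ * p / Φm + σ^2 * (p / Φm) / |μ| := by
        field_simp
        ring
      rw [hexp]
      have : 0 ≤ σ^2 * (p / Φm) / |μ| := by positivity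
      linarith
    linarith
  refine ⟨part1, ?_, ?_⟩
  · -- part 2
    have h2 : σ / |μ| * p / Φm ≤ (t^2+1) / t^2 := by
      rw [div_le_iff₀ hΦm]
      have hσμ : σ / |μ| * p = p / t := by
        rw [htdef]; field_simp
      rw [hσμ]
      calc p / t = (t^2+1)/t^2 * (p * t / (t^2+1)) := by field_simp
        _ ≤ (t^2+1)/t^2 * Φm := by
            apply mul_le_mul_of_nonneg_left htail (by positivity)
    linarith
  · -- part 3
    have : (t^2+1)/t^2 < 2 := by
      rw [div_lt_iff₀ (by positivity)]
      nlinarith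
    linarith
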